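/- arXiv:2507.22200 — 3 statements merged into one kernel-verified Lean document; each statement's English description precedes it below -/
import Mathlib

section
/- Let H be a real symmetric n×n matrix strictly supported on G, let λ ∈ ℝ and ψ ∈ ℝ^V satisfy Hψ = λψ with dim ker(H − λI) = 1 and ψ_r ≠ 0 for every vertex r, and let C be a frame for the cycle space Z. Then the nodal count satisfies ν(ψ,H) = n_-(H − λI) + n_-(C^⊤ Φ^{-1} C); that is, writing k − 1 = n_-(H − λI) (so λ is the k-th smallest eigenvalue of H), one has ν(ψ,H) = k − 1 + n_-([Φ^{-1}]_Z). -/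
open Matrix

/-- A finite simple graph with a chosen orientation of each edge:
`E` is the edge index type, each edge `e` goes from `src e` to `tgt e`. -/
structure OrientedGraph (V E : Type*) where
  src : E → V
  tgt : E → V
  loopless : ∀ e, src e ≠ tgt e
  edgeInj : ∀ e f, (src e = src f ∧ tgt e = tgt f) ∨ (src e = tgt f ∧ tgt e = src f) → e = f

/-- The underlying simple graph: `r` and `s` are adjacent iff some oriented edge joins them. -/
def OrientedGraph.toSimpleGraph {V E : Type*} (G : OrientedGraph V E) : SimpleGraph V where
  Adj r s := ∃ e, (G.src e = r ∧ G.tgt e = s) ∨ (G.src e = s ∧ G.tgt e = r)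
  symm := by
    constructor
    intro r s h
    obtain ⟨e, h⟩ := h
    exact ⟨e, h.symm⟩
  loopless := by
    constructor
    intro r h
    obtain ⟨e, h⟩ := h
    rcases h with ⟨h1, h2⟩ | ⟨h1, h2⟩ <;> exact G.loopless e (h1.trans h2.symm)

/-- `H` is strictly supported on `G`: off-diagonal entries are nonzero exactly on edges. -/
def OrientedGraph.StrictSupport {V E : Type*} (G : OrientedGraph V E)
    (H : Matrix V V ℝ) : Prop :=
  ∀ r s, r ≠ s → (H r s ≠ 0 ↔ G.toSimpleGraph.Adj r s)

/-- `H` is supported on `G`: off-diagonal nonzero entries occur only on edges. -/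
def OrientedGraph.Support {V E : Type*} (G : OrientedGraph V E)
    (H : Matrix V V ℝ) : Prop :=
  ∀ r s, r ≠ s → H r s ≠ 0 → G.toSimpleGraph.Adj r s

/-- The coboundary map `d : ℝ^V → ℝ^E`, `(dθ)_{(r→s)} = θ_s - θ_r`, as an `E × V` matrix. -/
def OrientedGraph.cob {V E : Type*} [DecidableEq V] (G : OrientedGraph V E) :
    Matrix E V ℝ :=
  Matrix.of fun e v => (if G.tgt e = v then (1 : ℝ) else 0) - (if G.src e = v then (1 : ℝ) else 0)

/-- The cycle space `Z = ker dᵀ ⊆ ℝ^E`. -/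
noncomputable def OrientedGraph.cycleSpace {V E : Type*} [Fintype V] [Fintype E]
    [DecidableEq V] (G : OrientedGraph V E) : Submodule ℝ (E → ℝ) :=
  LinearMap.ker (G.cob)ᵀ.mulVecLin

/-- The diagonal matrix `Φ` on `ℝ^E` with entries `Φ_{(r→s)} = -ψ_r H_{rs} ψ_s`. -/
noncomputable def PhiMat {V E : Type*} [DecidableEq E] (G : OrientedGraph V E)
    (H : Matrix V V ℝ) (ψ : V → ℝ) : Matrix E E ℝ :=
  Matrix.diagonal fun e => -(ψ (G.src e) * H (G.src e) (G.tgt e) * ψ (G.tgt e))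

/-- The nodal count `ν(ψ,H) = #{(r→s) ∈ E : ψ_r H_{rs} ψ_s > 0}`. -/
noncomputable def nodalCount {V E : Type*} (G : OrientedGraph V E)
    (H : Matrix V V ℝ) (ψ : V → ℝ) : ℕ :=
  Nat.card {e : E // 0 < ψ (G.src e) * H (G.src e) (G.tgt e) * ψ (G.tgt e)}

/-- `C` is a frame for the cycle space: its columns form a basis of `Z`. -/
def IsFrame {V E : Type*} [Fintype V] [Fintype E] [DecidableEq V]
    (G : OrientedGraph V E) {β : ℕ} (C : Matrix E (Fin β) ℝ) : Prop :=
  LinearMap.ker C.mulVecLin = ⊥ ∧ LinearMap.range C.mulVecLin = G.cycleSpace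

/-- `n₋(A)`: the number of negative eigenvalues (with multiplicity) of a hermitian matrix. -/
noncomputable def negEig {𝕜 : Type*} [RCLike 𝕜] {m : Type*} [Fintype m] [DecidableEq m]
    (A : Matrix m m 𝕜) : ℕ :=
  if h : A.IsHermitian then Nat.card {i // h.eigenvalues i < 0} else 0

/-- `n₊(A)`: the number of positive eigenvalues (with multiplicity) of a hermitian matrix. -/
noncomputable def posEig {𝕜 : Type*} [RCLike 𝕜] {m : Type*} [Fintype m] [DecidableEq m]
    (A : Matrix m m 𝕜) : ℕ :=
  if h : A.IsHermitian then Nat.card {i // 0 < h.eigenvalues i} else 0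

/-- `n₀(A)`: the number of zero eigenvalues of a hermitian matrix, i.e. `dim ker A`. -/
noncomputable def zeroEig {𝕜 : Type*} [RCLike 𝕜] {m : Type*} [Fintype m] [DecidableEq m]
    (A : Matrix m m 𝕜) : ℕ :=
  Module.finrank 𝕜 (LinearMap.ker A.mulVecLin)

/-- `n₋([A]_W)`: the Morse index (number of negative eigenvalues) of the compression of
a hermitian matrix `A` to the subspace `W`, i.e. the maximal dimension of a subspace of `W`
on which the hermitian form of `A` is negative definite. -/
noncomputable def negIndexOn {𝕜 : Type*} [RCLike 𝕜] {m : Type*} [Fintype m]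
    (A : Matrix m m 𝕜) (W : Submodule 𝕜 (m → 𝕜)) : ℕ :=
  sSup {k : ℕ | ∃ U : Submodule 𝕜 (m → 𝕜), U ≤ W ∧ Module.finrank 𝕜 U = k ∧
    ∀ x ∈ U, x ≠ 0 → RCLike.re (star x ⬝ᵥ A.mulVec x) < 0}

/-- `n₊([A]_W)`: the number of positive eigenvalues of the compression of a hermitian
matrix `A` to the subspace `W`. -/
noncomputable def posIndexOn {𝕜 : Type*} [RCLike 𝕜] {m : Type*} [Fintype m]
    (A : Matrix m m 𝕜) (W : Submodule 𝕜 (m → 𝕜)) : ℕ :=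
  sSup {k : ℕ | ∃ U : Submodule 𝕜 (m → 𝕜), U ≤ W ∧ Module.finrank 𝕜 U = k ∧
    ∀ x ∈ U, x ≠ 0 → 0 < RCLike.re (star x ⬝ᵥ A.mulVec x)}

/-- The linear functional `x ↦ v ⬝ᵥ x`. -/
noncomputable def dotLeft {𝕜 : Type*} [RCLike 𝕜] {m : Type*} [Fintype m] (v : m → 𝕜) :
    (m → 𝕜) →ₗ[𝕜] 𝕜 where
  toFun x := v ⬝ᵥ x
  map_add' x y := by simp [dotProduct_add]
  map_smul' c x := by simp [dotProduct_smul]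

/-- `n₀([A]_W)`: the dimension of the kernel of the compression of `A` to `W`,
i.e. of `{x ∈ W : Ax ⊥ W}`. -/
noncomputable def zeroIndexOn {𝕜 : Type*} [RCLike 𝕜] {m : Type*} [Fintype m]
    (A : Matrix m m 𝕜) (W : Submodule 𝕜 (m → 𝕜)) : ℕ :=
  Module.finrank 𝕜
    ↥(W ⊓ ⨅ y : W, LinearMap.ker ((dotLeft (star (y : m → 𝕜))).comp A.mulVecLin))

/-- Extension of `α ∈ ℝ^E` to an antisymmetric function on pairs of vertices:
`α_{rs} = α_e` if `e = (r→s) ∈ E`, `α_{rs} = -α_e` if `e = (s→r) ∈ E`, and `0` otherwise. -/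
noncomputable def alphaExt {V E : Type*} [Fintype E] [DecidableEq V]
    (G : OrientedGraph V E) (α : E → ℝ) (r s : V) : ℝ :=
  ∑ e : E, ((if G.src e = r ∧ G.tgt e = s then α e else 0) -
            (if G.src e = s ∧ G.tgt e = r then α e else 0))

/-- The phase-perturbed matrix `H_α` with `(H_α)_{rs} = e^{iα_{rs}} H_{rs}` for `r ≠ s`. -/
noncomputable def phaseMat {V E : Type*} [Fintype E] [DecidableEq V]
    (G : OrientedGraph V E) (H : Matrix V V ℝ) (α : E → ℝ) : Matrix V V ℂ :=
  Matrix.of fun r s =>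
    if r = s then (H r r : ℂ)
    else Complex.exp (Complex.I * (alphaExt G α r s : ℂ)) * (H r s : ℂ)


/-! `ν` counts the negative entries of the diagonal matrix `Φ`, i.e. it is `n₋(Φ)`. For
`Hψ = λψ`, pulling `Φ` back along the coboundary gives `dᵀ Φ d = D (H - λ) D` with
`D = diagonal ψ`; as `ker (H - λ)` is spanned by the nowhere vanishing `ψ`, this form has the
same kernel as `d`. Hence `range d` and `Φ⁻¹ Z` together span `ℝ^E`, so `S = [d | Φ⁻¹ C]` is onto
and `Sᵀ Φ S` is block diagonal with blocks `dᵀ Φ d` and `Cᵀ Φ⁻¹ C`. Sylvester's law of inertia,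
for the negative index as the largest dimension of a negative-definite subspace, then gives
`n₋(Φ) = n₋(H - λ) + n₋(Cᵀ Φ⁻¹ C)`. -/

lemma Submodule.finrank_map_of_injOn {M N : Type*} [AddCommGroup M] [Module ℝ M]
    [AddCommGroup N] [Module ℝ N] (f : M →ₗ[ℝ] N) {U : Submodule ℝ M}
    (hf : ∀ x ∈ U, f x = 0 → x = 0) :
    Module.finrank ℝ (U.map f) = Module.finrank ℝ U := by
  rw [← LinearMap.range_domRestrict]
  refine LinearMap.finrank_range_of_inj <| (injective_iff_map_eq_zero _).mpr fun x hx => ?_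
  exact Subtype.ext (hf x x.2 hx)

namespace Matrix

lemma diagonal_mulVec_eq_mul {m α : Type*} [Fintype m] [DecidableEq m]
    [NonUnitalNonAssocSemiring α] (v w : m → α) : diagonal v *ᵥ w = v * w :=
  funext (mulVec_diagonal v w)

section NegIndex

variable {m n : Type*} [Fintype m] [Fintype n]

/-- Unlike the eigenvalue count `negEig`, this is visibly monotone under pullback of the
quadratic form along linear maps. -/
noncomputable def negIndex (A : Matrix m m ℝ) : ℕ :=
  sSup {k | ∃ U : Submodule ℝ (m → ℝ), Module.finrank ℝ U = k ∧
    ∀ x ∈ U, x ≠ 0 → x ⬝ᵥ A *ᵥ x < 0}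

lemma bddAbove_negIndex_set (A : Matrix m m ℝ) :
    BddAbove {k | ∃ U : Submodule ℝ (m → ℝ), Module.finrank ℝ U = k ∧
      ∀ x ∈ U, x ≠ 0 → x ⬝ᵥ A *ᵥ x < 0} :=
  ⟨Fintype.card m, by rintro k ⟨W, rfl, -⟩; simpa using W.finrank_le⟩

lemma exists_finrank_eq_negIndex (A : Matrix m m ℝ) : ∃ U : Submodule ℝ (m → ℝ),
    Module.finrank ℝ U = negIndex A ∧ ∀ x ∈ U, x ≠ 0 → x ⬝ᵥ A *ᵥ x < 0 :=
  Nat.sSup_mem (h₂ := bddAbove_negIndex_set A) ⟨0, by exact ⟨⊥, finrank_bot ℝ _, by simp⟩⟩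

lemma finrank_le_negIndex {A : Matrix m m ℝ} {U : Submodule ℝ (m → ℝ)}
    (hU : ∀ x ∈ U, x ≠ 0 → x ⬝ᵥ A *ᵥ x < 0) : Module.finrank ℝ U ≤ negIndex A :=
  le_csSup (bddAbove_negIndex_set A) ⟨U, rfl, hU⟩

lemma negIndex_le_of_dotProduct_mulVec_eq {A : Matrix m m ℝ} {B : Matrix n n ℝ}
    (f : (n → ℝ) →ₗ[ℝ] (m → ℝ)) (hf : ∀ x, f x ⬝ᵥ A *ᵥ f x = x ⬝ᵥ B *ᵥ x) :
    negIndex B ≤ negIndex A := by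
  obtain ⟨U, hUB, hU⟩ := exists_finrank_eq_negIndex B
  have hinj : ∀ x ∈ U, f x = 0 → x = 0 := fun x hx hfx => by
    by_contra hx0
    simpa [← hf x, hfx] using hU x hx hx0
  rw [← hUB, ← Submodule.finrank_map_of_injOn f hinj]
  refine finrank_le_negIndex ?_
  rintro _ ⟨x, hx, rfl⟩ hfx
  rw [hf x]
  exact hU x hx (by rintro rfl; simp at hfx)

lemma dotProduct_transpose_mul_mul_mulVec (A : Matrix m m ℝ) (S : Matrix m n ℝ)
    (x y : n → ℝ) : x ⬝ᵥ (Sᵀ * A * S) *ᵥ y = S *ᵥ x ⬝ᵥ A *ᵥ (S *ᵥ y) := by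
  rw [← mulVec_mulVec, ← mulVec_mulVec, dotProduct_mulVec, vecMul_transpose]

lemma negIndex_transpose_mul_mul_of_surjective (A : Matrix m m ℝ) {S : Matrix m n ℝ}
    (hS : Function.Surjective S.mulVec) : negIndex (Sᵀ * A * S) = negIndex A := by
  obtain ⟨g, hg⟩ := S.mulVecLin.exists_rightInverse_of_surjective
    (LinearMap.range_eq_top.mpr hS)
  refine le_antisymm (negIndex_le_of_dotProduct_mulVec_eq S.mulVecLin fun x => ?_)
    (negIndex_le_of_dotProduct_mulVec_eq g fun x => ?_)
  · exact (dotProduct_transpose_mul_mul_mulVec A S x x).symm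
  · rw [dotProduct_transpose_mul_mul_mulVec]
    simpa using congrArg (fun y => y ⬝ᵥ A *ᵥ y) (LinearMap.congr_fun hg x)

variable [DecidableEq m]

lemma dotProduct_diagonal_mulVec_self (v x : m → ℝ) :
    x ⬝ᵥ diagonal v *ᵥ x = ∑ i, v i * x i ^ 2 := by
  simp only [dotProduct, mulVec_diagonal]
  exact Finset.sum_congr rfl fun i _ => by ring

lemma negIndex_diagonal_le (v : m → ℝ) : negIndex (diagonal v) ≤ Nat.card {i // v i < 0} := by
  obtain ⟨U, hUv, hU⟩ := exists_finrank_eq_negIndex (diagonal v)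
  let restrict := LinearMap.funLeft ℝ ℝ (Subtype.val : {i // v i < 0} → m)
  have hinj : ∀ x ∈ U, restrict x = 0 → x = 0 := fun x hx hx0 => by
    by_contra hne
    refine (hU x hx hne).not_ge ?_
    rw [dotProduct_diagonal_mulVec_self]
    refine Finset.sum_nonneg fun i _ => ?_
    by_cases hi : v i < 0
    · simp [show x i = 0 from congrFun hx0 ⟨i, hi⟩]
    · exact mul_nonneg (not_lt.mp hi) (sq_nonneg _)
  rw [← hUv, ← Submodule.finrank_map_of_injOn restrict hinj, Nat.card_eq_fintype_card,
    ← Module.finrank_fintype_fun_eq_card ℝ]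
  exact Submodule.finrank_le _

lemma le_negIndex_diagonal (v : m → ℝ) : Nat.card {i // v i < 0} ≤ negIndex (diagonal v) := by
  let restrict := LinearMap.funLeft ℝ ℝ (Subtype.val : {i // ¬ v i < 0} → m)
  have hneg : ∀ x ∈ LinearMap.ker restrict, x ≠ 0 → x ⬝ᵥ diagonal v *ᵥ x < 0 := by
    intro x hx hne
    have hx0 : ∀ i, ¬ v i < 0 → x i = 0 := fun i hi => congrFun hx ⟨i, hi⟩
    obtain ⟨j, hj⟩ := Function.ne_iff.mp hne
    rw [dotProduct_diagonal_mulVec_self]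
    refine Finset.sum_neg' (fun i _ => ?_) ⟨j, Finset.mem_univ j, ?_⟩
    · by_cases hi : v i < 0
      · exact mul_nonpos_of_nonpos_of_nonneg hi.le (sq_nonneg _)
      · simp [hx0 i hi]
    · exact mul_neg_of_neg_of_pos (by_contra fun h => hj (hx0 j h)) (sq_pos_of_ne_zero hj)
  have hrank := restrict.finrank_range_add_finrank_ker
  have hrange := (LinearMap.range restrict).finrank_le
  simp only [Module.finrank_fintype_fun_eq_card] at hrank hrange
  have hcompl := Fintype.card_subtype_compl (fun i => v i < 0)
  have hcard := Fintype.card_subtype_le (fun i => v i < 0)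
  have hker := finrank_le_negIndex hneg
  rw [Nat.card_eq_fintype_card]
  omega

lemma negIndex_diagonal (v : m → ℝ) : negIndex (diagonal v) = Nat.card {i // v i < 0} :=
  (negIndex_diagonal_le v).antisymm (le_negIndex_diagonal v)

lemma IsSymm.exists_eq_transpose_mul_diagonal_mul {A : Matrix m m ℝ} (hA : A.IsSymm) :
    ∃ U : Matrix m m ℝ, IsUnit U ∧
      A = Uᵀ * diagonal (isHermitian_iff_isSymm.mpr hA).eigenvalues * U := by
  set hA' := isHermitian_iff_isSymm.mpr hA
  refine ⟨star (hA'.eigenvectorUnitary : Matrix m m ℝ), Unitary.isUnit_coe.star, ?_⟩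
  conv_lhs => rw [hA'.spectral_theorem]
  simp [star_eq_conjTranspose]

lemma negIndex_eq_card_eigenvalues_neg {A : Matrix m m ℝ} (hA : A.IsSymm) :
    negIndex A = Nat.card {i // (isHermitian_iff_isSymm.mpr hA).eigenvalues i < 0} := by
  obtain ⟨U, hU, hAU⟩ := hA.exists_eq_transpose_mul_diagonal_mul
  conv_lhs => rw [hAU]
  rw [negIndex_transpose_mul_mul_of_surjective _ (mulVec_surjective_iff_isUnit.mpr hU),
    negIndex_diagonal]

lemma negEig_eq_negIndex {A : Matrix m m ℝ} (hA : A.IsSymm) : negEig A = negIndex A := by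
  rw [negEig, dif_pos (isHermitian_iff_isSymm.mpr hA), negIndex_eq_card_eigenvalues_neg hA]

lemma negIndex_fromBlocks_zero [DecidableEq n] {A : Matrix m m ℝ} {B : Matrix n n ℝ}
    (hA : A.IsSymm) (hB : B.IsSymm) :
    negIndex (fromBlocks A 0 0 B) = negIndex A + negIndex B := by
  obtain ⟨U, hU, hAU⟩ := hA.exists_eq_transpose_mul_diagonal_mul
  obtain ⟨W, hW, hBW⟩ := hB.exists_eq_transpose_mul_diagonal_mul
  have hblock : fromBlocks A 0 0 B = (fromBlocks U 0 0 W)ᵀ *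
      diagonal (Sum.elim (isHermitian_iff_isSymm.mpr hA).eigenvalues
        (isHermitian_iff_isSymm.mpr hB).eigenvalues) * fromBlocks U 0 0 W := by
    rw [← fromBlocks_diagonal, fromBlocks_transpose, fromBlocks_multiply, fromBlocks_multiply]
    simp [hAU, hBW]
  have hunit : IsUnit (fromBlocks U 0 0 W) := isUnit_fromBlocks_zero₂₁.mpr ⟨hU, hW⟩
  rw [hblock, negIndex_transpose_mul_mul_of_surjective _ (mulVec_surjective_iff_isUnit.mpr hunit),
    negIndex_diagonal, negIndex_eq_card_eigenvalues_neg hA, negIndex_eq_card_eigenvalues_neg hB,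
    Nat.card_congr Equiv.subtypeSum, Nat.card_sum]
  rfl

end NegIndex

lemma IsSymm.transpose_mul_mul {m n : Type*} [Fintype m] {A : Matrix m m ℝ} (hA : A.IsSymm)
    (B : Matrix m n ℝ) : (Bᵀ * A * B).IsSymm := by
  simp [IsSymm, transpose_mul, hA.eq, Matrix.mul_assoc]

section Splitting

variable {E V p : Type*} [Fintype E] {P : Matrix E E ℝ} {d : Matrix E V ℝ}
  {C : Matrix E p ℝ}

lemma transpose_mul_eq_zero_of_range_le_ker [Fintype p] [DecidableEq p]
    (hCd : LinearMap.range C.mulVecLin ≤ LinearMap.ker dᵀ.mulVecLin) : dᵀ * C = 0 :=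
  ext_of_mulVec_single fun j => by
    rw [← mulVec_mulVec, zero_mulVec]
    exact hCd (LinearMap.mem_range_self C.mulVecLin (Pi.single j 1))

variable [DecidableEq E]

lemma transpose_fromCols_mul_mul_fromCols (hP : P.IsSymm) (hPu : IsUnit P.det)
    (hdC : dᵀ * C = 0) :
    (fromCols d (P⁻¹ * C))ᵀ * P * fromCols d (P⁻¹ * C) =
      fromBlocks (dᵀ * P * d) 0 0 (Cᵀ * P⁻¹ * C) := by
  have hCd : Cᵀ * d = 0 := by
    rw [← transpose_transpose d, ← transpose_mul, hdC, transpose_zero]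
  rw [transpose_fromCols, fromRows_mul, fromRows_mul_fromCols, transpose_mul,
    transpose_nonsing_inv, hP.eq]
  simp only [Matrix.mul_assoc, mul_nonsing_inv_cancel_left (h := hPu),
    nonsing_inv_mul_cancel_left (h := hPu), hdC, hCd]

/-- `range d` and `P⁻¹ (range C)` are complementary, their dimensions adding up to
`rank dᵀ + dim ker dᵀ`. -/
lemma mulVec_fromCols_surjective [Fintype V] [Fintype p] [DecidableEq p] (hPu : IsUnit P.det)
    (hCd : LinearMap.range C.mulVecLin = LinearMap.ker dᵀ.mulVecLin)
    (hd : ∀ θ, (dᵀ * P * d) *ᵥ θ = 0 → d *ᵥ θ = 0) :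
    Function.Surjective (fromCols d (P⁻¹ * C)).mulVec := by
  have hdisj : LinearMap.range d.mulVecLin ⊓ LinearMap.range (P⁻¹ * C).mulVecLin = ⊥ := by
    refine (Submodule.eq_bot_iff _).mpr ?_
    rintro _ ⟨⟨θ, rfl⟩, ⟨c, hc⟩⟩
    refine hd θ ?_
    have hPc : P *ᵥ (d *ᵥ θ) = C *ᵥ c := by
      simp only [mulVecLin_apply] at hc
      rw [← hc, mulVec_mulVec, mul_nonsing_inv_cancel_left (h := hPu)]
    rw [← mulVec_mulVec, ← mulVec_mulVec, hPc, mulVec_mulVec,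
      transpose_mul_eq_zero_of_range_le_ker hCd.le, zero_mulVec]
  have hrange : Module.finrank ℝ (LinearMap.range (P⁻¹ * C).mulVecLin) =
      Module.finrank ℝ (LinearMap.ker dᵀ.mulVecLin) := by
    rw [← hCd, Matrix.mulVecLin_mul, LinearMap.range_comp]
    refine Submodule.finrank_map_of_injOn _ fun x _ hx => ?_
    simpa [mulVec_mulVec, mul_nonsing_inv (h := hPu)] using congrArg (P *ᵥ ·) hx
  have hsup := Submodule.finrank_sup_add_finrank_inf_eq (LinearMap.range d.mulVecLin)
    (LinearMap.range (P⁻¹ * C).mulVecLin)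
  rw [hdisj, finrank_bot, add_zero, hrange] at hsup
  have htop : LinearMap.range d.mulVecLin ⊔ LinearMap.range (P⁻¹ * C).mulVecLin = ⊤ := by
    refine Submodule.eq_top_of_finrank_eq ?_
    rw [hsup, ← dᵀ.mulVecLin.finrank_range_add_finrank_ker]
    exact congrArg (· + _) (rank_transpose d).symm
  intro z
  obtain ⟨_, ⟨θ, rfl⟩, _, ⟨c, rfl⟩, rfl⟩ :=
    Submodule.mem_sup.mp (htop ▸ Submodule.mem_top (x := z))
  exact ⟨Sum.elim θ c, fromCols_mulVec_sumElim _ _ _ _⟩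

lemma negIndex_eq_add_of_range_eq_ker [Fintype V] [Fintype p] [DecidableEq V] [DecidableEq p]
    (hP : P.IsSymm) (hPu : IsUnit P.det)
    (hCd : LinearMap.range C.mulVecLin = LinearMap.ker dᵀ.mulVecLin)
    (hd : ∀ θ, (dᵀ * P * d) *ᵥ θ = 0 → d *ᵥ θ = 0) :
    negIndex P = negIndex (dᵀ * P * d) + negIndex (Cᵀ * P⁻¹ * C) := by
  rw [← negIndex_transpose_mul_mul_of_surjective P (mulVec_fromCols_surjective hPu hCd hd),
    transpose_fromCols_mul_mul_fromCols hP hPu (transpose_mul_eq_zero_of_range_le_ker hCd.le),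
    negIndex_fromBlocks_zero (hP.transpose_mul_mul d) (hP.inv.transpose_mul_mul C)]

end Splitting

lemma apply_eq_apply_of_mulVec_mul_eq_zero {V : Type*} [Fintype V] {K : Matrix V V ℝ}
    {ψ θ : V → ℝ} (hker : Module.finrank ℝ (LinearMap.ker K.mulVecLin) = 1) (hKψ : K *ᵥ ψ = 0)
    (hψ : ∀ r, ψ r ≠ 0) (hθ : K *ᵥ (ψ * θ) = 0) (r s : V) : θ r = θ s := by
  have hψ0 : (⟨ψ, hKψ⟩ : LinearMap.ker K.mulVecLin) ≠ 0 :=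
    fun h => hψ r (congrFun (congrArg Subtype.val h) r)
  obtain ⟨c, hc⟩ := (finrank_eq_one_iff_of_nonzero' _ hψ0).mp hker ⟨ψ * θ, hθ⟩
  have hθc : ∀ v, θ v = c := fun v => by
    have hv := congrFun (congrArg Subtype.val hc) v
    simp only [SetLike.val_smul, Pi.smul_apply, smul_eq_mul, Pi.mul_apply] at hv
    exact mul_left_cancel₀ (hψ v) (by rw [← hv, mul_comm])
  rw [hθc r, hθc s]

end Matrix

namespace OrientedGraph

variable {V E : Type*} (G : OrientedGraph V E)

lemma StrictSupport.support {H : Matrix V V ℝ} (hH : G.StrictSupport H) : G.Support H :=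
  fun r s hrs => (hH r s hrs).mp

lemma nodalCount_eq_negIndex_PhiMat [Fintype E] [DecidableEq E] (H : Matrix V V ℝ)
    (ψ : V → ℝ) :
    nodalCount G H ψ = negIndex (PhiMat G H ψ) := by
  rw [PhiMat, negIndex_diagonal]
  exact Nat.card_congr (Equiv.subtypeEquivRight fun e => neg_lt_zero.symm)

lemma isUnit_det_PhiMat [Fintype E] [DecidableEq E] {H : Matrix V V ℝ}
    (hsupp : G.StrictSupport H) {ψ : V → ℝ} (hψ : ∀ r, ψ r ≠ 0) : IsUnit (PhiMat G H ψ).det := by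
  refine (isUnit_iff_isUnit_det _).mp (isUnit_diagonal.mpr (Pi.isUnit_iff.mpr fun e => ?_))
  have hH := (hsupp _ _ (G.loopless e)).mpr ⟨e, Or.inl ⟨rfl, rfl⟩⟩
  exact (neg_ne_zero.mpr (mul_ne_zero (mul_ne_zero (hψ _) hH) (hψ _))).isUnit

variable [Fintype V]

lemma sum_sum_eq_sum_edges [Fintype E] (f : V → V → ℝ)
    (hf : ∀ r s, f r s ≠ 0 → G.toSimpleGraph.Adj r s) :
    ∑ r, ∑ s, f r s = ∑ e, (f (G.src e) (G.tgt e) + f (G.tgt e) (G.src e)) := by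
  let ends : E ⊕ E → V × V :=
    Sum.elim (fun e => (G.src e, G.tgt e)) (fun e => (G.tgt e, G.src e))
  have hinj : Function.Injective ends := by
    rintro (a | a) (b | b) hab <;>
      simp only [ends, Sum.elim_inl, Sum.elim_inr, Prod.mk.injEq] at hab
    · rw [G.edgeInj a b (Or.inl hab)]
    · obtain rfl := G.edgeInj a b (Or.inr hab)
      exact absurd hab.1 (G.loopless a)
    · obtain rfl := G.edgeInj a b (Or.inr ⟨hab.2, hab.1⟩)
      exact absurd hab.2 (G.loopless a)
    · rw [G.edgeInj a b (Or.inl ⟨hab.2, hab.1⟩)]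
  have hends : ∀ x ∉ Set.range ends, f x.1 x.2 = 0 := by
    rintro ⟨r, s⟩ hrs
    by_contra hne
    obtain ⟨e, he | he⟩ := hf r s hne
    · exact hrs ⟨Sum.inl e, by simp [ends, he.1, he.2]⟩
    · exact hrs ⟨Sum.inr e, by simp [ends, he.1, he.2]⟩
  calc ∑ r, ∑ s, f r s = ∑ i, f (ends i).1 (ends i).2 := by
        rw [← Fintype.sum_prod_type']
        refine (Finset.sum_of_injOn ends hinj.injOn (by simp [Set.MapsTo]) ?_
          fun _ _ => rfl).symm
        exact fun x _ hx => hends x (by simpa using hx)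
    _ = _ := by rw [Fintype.sum_sum_type, Finset.sum_add_distrib]; rfl

variable [DecidableEq V]

lemma cob_mulVec_apply (θ : V → ℝ) (e : E) :
    (G.cob *ᵥ θ) e = θ (G.tgt e) - θ (G.src e) := by
  simp [cob, mulVec, dotProduct, sub_mul]

variable [Fintype E] [DecidableEq E]

/-- Both sides are the bilinear form `∑_{r,s} ψ_r H_{rs} ψ_s x_r (y_s - y_r)`; grouping its
terms by edges gives the left-hand side. -/
lemma cob_transpose_mul_PhiMat_mul_cob {H : Matrix V V ℝ} (hH : H.IsSymm)
    (hsupp : G.Support H) (ψ : V → ℝ) :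
    G.cobᵀ * PhiMat G H ψ * G.cob =
      diagonal ψ * H * diagonal ψ - diagonal (ψ * H *ᵥ ψ) := by
  refine (Matrix.toLinearMap₂' ℝ (S₁ := ℝ) (S₂ := ℝ)).injective
    (LinearMap.ext₂ fun x y => ?_)
  rw [toLinearMap₂'_apply', toLinearMap₂'_apply', dotProduct_transpose_mul_mul_mulVec]
  have hf : ∀ r s, ψ r * H r s * ψ s * x r * (y s - y r) ≠ 0 → G.toSimpleGraph.Adj r s := by
    intro r s hrs
    exact hsupp r s (by rintro rfl; simp at hrs) (by rintro h; simp [h] at hrs)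
  calc G.cob *ᵥ x ⬝ᵥ PhiMat G H ψ *ᵥ (G.cob *ᵥ y)
      = ∑ r, ∑ s, ψ r * H r s * ψ s * x r * (y s - y r) := by
        rw [G.sum_sum_eq_sum_edges _ hf]
        simp only [PhiMat, dotProduct, mulVec_diagonal, cob_mulVec_apply, hH.apply]
        exact Finset.sum_congr rfl fun e _ => by ring
    _ = _ := by
        rw [sub_mulVec, dotProduct_sub, ← mulVec_mulVec, ← mulVec_mulVec]
        simp only [diagonal_mulVec_eq_mul]
        simp only [dotProduct, mulVec, Pi.mul_apply, Finset.mul_sum, Finset.sum_mul,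
          ← Finset.sum_sub_distrib]
        exact Finset.sum_congr rfl fun r _ => Finset.sum_congr rfl fun s _ => by ring

lemma cob_transpose_mul_PhiMat_mul_cob_of_mulVec_eq_smul {H : Matrix V V ℝ} (hH : H.IsSymm)
    (hsupp : G.Support H) {lam : ℝ} {ψ : V → ℝ} (heig : H *ᵥ ψ = lam • ψ) :
    G.cobᵀ * PhiMat G H ψ * G.cob = (diagonal ψ)ᵀ * (H - lam • 1) * diagonal ψ := by
  rw [G.cob_transpose_mul_PhiMat_mul_cob hH hsupp, heig, diagonal_transpose, Matrix.mul_sub,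
    Matrix.sub_mul, Matrix.mul_smul, Matrix.smul_mul, Matrix.mul_one, diagonal_mul_diagonal,
    mul_smul_comm, diagonal_smul]
  rfl

lemma cob_mulVec_eq_zero_of_mulVec_eq_zero {H : Matrix V V ℝ} (hH : H.IsSymm)
    (hsupp : G.Support H) {lam : ℝ} {ψ : V → ℝ} (heig : H *ᵥ ψ = lam • ψ)
    (hker : Module.finrank ℝ (LinearMap.ker (H - lam • (1 : Matrix V V ℝ)).mulVecLin) = 1)
    (hψ : ∀ r, ψ r ≠ 0) (θ : V → ℝ)
    (hθ : (G.cobᵀ * PhiMat G H ψ * G.cob) *ᵥ θ = 0) :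
    G.cob *ᵥ θ = 0 := by
  rw [G.cob_transpose_mul_PhiMat_mul_cob_of_mulVec_eq_smul hH hsupp heig, ← mulVec_mulVec,
    ← mulVec_mulVec, diagonal_transpose] at hθ
  have hKψθ : (H - lam • 1) *ᵥ (ψ * θ) = 0 := by
    ext r
    have hr := congrFun hθ r
    rw [mulVec_diagonal, diagonal_mulVec_eq_mul] at hr
    exact (mul_eq_zero.mp hr).resolve_left (hψ r)
  have hKψ : (H - lam • 1) *ᵥ ψ = 0 := by
    rw [sub_mulVec, heig, smul_mulVec, one_mulVec, sub_self]
  ext e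
  rw [cob_mulVec_apply, Pi.zero_apply, sub_eq_zero]
  exact apply_eq_apply_of_mulVec_mul_eq_zero hker hKψ hψ hKψθ _ _

end OrientedGraph

theorem nodal_count_formula_general
    {V E : Type*} [Fintype V] [Fintype E] [DecidableEq V] [DecidableEq E]
    (G : OrientedGraph V E)
    (H : Matrix V V ℝ) (hsymm : H.IsSymm) (hsupp : G.StrictSupport H)
    (lam : ℝ) (ψ : V → ℝ) (heig : H.mulVec ψ = lam • ψ)
    (hker : Module.finrank ℝ (LinearMap.ker (H - lam • (1 : Matrix V V ℝ)).mulVecLin) = 1)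
    (hψ : ∀ r, ψ r ≠ 0)
    {β : ℕ} (C : Matrix E (Fin β) ℝ) (hC : IsFrame G C) :
    nodalCount G H ψ =
      negEig (H - lam • (1 : Matrix V V ℝ)) + negEig (Cᵀ * (PhiMat G H ψ)⁻¹ * C) := by
  have hΦ : (PhiMat G H ψ).IsSymm := isSymm_diagonal _
  have hK : (H - lam • (1 : Matrix V V ℝ)).IsSymm := hsymm.sub (isSymm_one.smul lam)
  have hD : Function.Surjective (diagonal ψ).mulVec := mulVec_surjective_iff_isUnit.mpr
    (isUnit_diagonal.mpr (Pi.isUnit_iff.mpr fun r => (hψ r).isUnit))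
  rw [G.nodalCount_eq_negIndex_PhiMat,
    negIndex_eq_add_of_range_eq_ker hΦ (G.isUnit_det_PhiMat hsupp hψ) hC.2
      (G.cob_mulVec_eq_zero_of_mulVec_eq_zero hsymm hsupp.support heig hker hψ),
    G.cob_transpose_mul_PhiMat_mul_cob_of_mulVec_eq_smul hsymm hsupp.support heig,
    negIndex_transpose_mul_mul_of_surjective _ hD, negEig_eq_negIndex hK,
    negEig_eq_negIndex (hΦ.inv.transpose_mul_mul C)]

/-- the oscillation formula
`ν(ψ,H) = n₋(H - λI) + n₋(Cᵀ Φ⁻¹ C) = (k-1) + n₋([Φ⁻¹]_Z)`. -/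
theorem nodal_count_formula
    {V E : Type*} [Fintype V] [Fintype E] [DecidableEq V] [DecidableEq E]
    (G : OrientedGraph V E) (hconn : G.toSimpleGraph.Connected)
    (H : Matrix V V ℝ) (hsymm : H.IsSymm) (hsupp : G.StrictSupport H)
    (lam : ℝ) (ψ : V → ℝ) (heig : H.mulVec ψ = lam • ψ)
    (hker : Module.finrank ℝ (LinearMap.ker (H - lam • (1 : Matrix V V ℝ)).mulVecLin) = 1)
    (hψ : ∀ r, ψ r ≠ 0)
    {β : ℕ} (C : Matrix E (Fin β) ℝ) (hC : IsFrame G C) :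
    nodalCount G H ψ =
      negEig (H - lam • (1 : Matrix V V ℝ)) + negEig (Cᵀ * (PhiMat G H ψ)⁻¹ * C) :=
  nodal_count_formula_general G H hsymm hsupp lam ψ heig hker hψ C hC
end

section
/- (Sylvester's law of inertia with a general transformation, kernel part.) Let H be an n×n Hermitian matrix and S an n×m complex matrix. Then n_0(S* H S) = n_0([H]_{Ran S}) + dim ker S. -/
open Matrix

/-! `S x` lies in the kernel of the compression of `H` to `Ran S` exactly when `H S x ⊥ Ran S`,
i.e. when `Sᴴ H S x = 0`. So `ker (Sᴴ H S)` is the preimage under `S` of a subspace of `Ran S`,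
and rank–nullity for `S` restricted to that preimage gives the count. -/

theorem LinearMap.finrank_comap_eq_finrank_range_inf_add_finrank_ker {K V W : Type*}
    [DivisionRing K] [AddCommGroup V] [Module K V] [FiniteDimensional K V]
    [AddCommGroup W] [Module K W] (f : V →ₗ[K] W) (U : Submodule K W) :
    Module.finrank K (U.comap f) =
      Module.finrank K ↥(LinearMap.range f ⊓ U) + Module.finrank K (LinearMap.ker f) := by
  have h := LinearMap.finrank_range_add_finrank_ker (f.domRestrict (U.comap f))
  rw [LinearMap.range_domRestrict, Submodule.map_comap_eq, LinearMap.ker_domRestrict,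
    (Submodule.comapSubtypeEquivOfLe (LinearMap.ker_le_comap f)).finrank_eq] at h
  exact h.symm

noncomputable def compressionKer {𝕜 : Type*} [RCLike 𝕜] {m : Type*} [Fintype m]
    (A : Matrix m m 𝕜) (W : Submodule 𝕜 (m → 𝕜)) : Submodule 𝕜 (m → 𝕜) :=
  W ⊓ ⨅ y : W, LinearMap.ker ((dotLeft (star (y : m → 𝕜))).comp A.mulVecLin)

section Compression

variable {𝕜 : Type*} [RCLike 𝕜] {m n : Type*} [Fintype m] [Fintype n]

theorem mem_compressionKer_iff (A : Matrix m m 𝕜) (W : Submodule 𝕜 (m → 𝕜)) (x : m → 𝕜) :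
    x ∈ compressionKer A W ↔ x ∈ W ∧ ∀ y ∈ W, star y ⬝ᵥ A *ᵥ x = 0 := by
  simp [compressionKer, dotLeft]

theorem zeroIndexOn_eq_finrank_compressionKer (A : Matrix m m 𝕜) (W : Submodule 𝕜 (m → 𝕜)) :
    zeroIndexOn A W = Module.finrank 𝕜 (compressionKer A W) :=
  rfl

theorem compressionKer_le (A : Matrix m m 𝕜) (W : Submodule 𝕜 (m → 𝕜)) :
    compressionKer A W ≤ W :=
  inf_le_left

theorem Matrix.conjTranspose_mulVec_eq_zero_iff (S : Matrix m n 𝕜) (v : m → 𝕜) :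
    Sᴴ *ᵥ v = 0 ↔ ∀ y ∈ LinearMap.range S.mulVecLin, star y ⬝ᵥ v = 0 := by
  classical
  have hadj : ∀ z, star (S *ᵥ z) ⬝ᵥ v = star z ⬝ᵥ Sᴴ *ᵥ v := fun z => by
    rw [star_mulVec, dotProduct_mulVec]
  refine ⟨fun h => ?_, fun h => ?_⟩
  · rintro _ ⟨z, rfl⟩
    rw [mulVecLin_apply, hadj, h, dotProduct_zero]
  · ext j
    have hj := h _ ⟨Pi.single j 1, rfl⟩
    rw [mulVecLin_apply, hadj] at hj
    simpa [dotProduct, Pi.single_apply] using hj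

theorem Matrix.ker_conjTranspose_mul_mul_mulVecLin (A : Matrix m m 𝕜)
    (S : Matrix m n 𝕜) :
    LinearMap.ker (Sᴴ * A * S).mulVecLin =
      (compressionKer A (LinearMap.range S.mulVecLin)).comap S.mulVecLin := by
  ext x
  rw [LinearMap.mem_ker, Submodule.mem_comap, mem_compressionKer_iff, mulVecLin_mul,
    mulVecLin_mul, LinearMap.comp_apply, LinearMap.comp_apply, mulVecLin_apply,
    S.conjTranspose_mulVec_eq_zero_iff, mulVecLin_apply]
  exact (and_iff_right (LinearMap.mem_range_self _ x)).symm

end Compression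

theorem sylvester_general_transformation_kernel_general
    {n m : Type*} [Fintype n] [Fintype m] [DecidableEq m]
    (H : Matrix n n ℂ) (S : Matrix n m ℂ) :
    zeroEig (Sᴴ * H * S) =
      zeroIndexOn H (LinearMap.range S.mulVecLin) +
        Module.finrank ℂ (LinearMap.ker S.mulVecLin) := by
  rw [zeroEig, zeroIndexOn_eq_finrank_compressionKer, Matrix.ker_conjTranspose_mul_mul_mulVecLin,
    LinearMap.finrank_comap_eq_finrank_range_inf_add_finrank_ker,
    inf_eq_right.mpr (compressionKer_le _ _)]

/-- Sylvester's law, kernel part: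
`n₀(Sᴴ H S) = n₀([H]_{Ran S}) + dim ker S`. -/
theorem sylvester_general_transformation_kernel
    {n m : Type*} [Fintype n] [Fintype m] [DecidableEq n] [DecidableEq m]
    (H : Matrix n n ℂ) (hH : H.IsHermitian) (S : Matrix n m ℂ) :
    zeroEig (Sᴴ * H * S) =
      zeroIndexOn H (LinearMap.range S.mulVecLin) +
        Module.finrank ℂ (LinearMap.ker S.mulVecLin) :=
  sylvester_general_transformation_kernel_general H S
end

section
/- Let H be a real symmetric n×n matrix strictly supported on G and let ψ ∈ ℝ^V be an eigenvector of H with eigenvalue λ having no zero entries. Then n_-([Φ]_{dℝ^V}) = n_-(H − λI), where dℝ^V ⊆ ℝ^E is the image of the coboundary map d. -/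
open Matrix

/-! For `x ∈ ℝ^V` put `θ = x / ψ`. The matrix `F_rs = ψ_r (H - λ)_rs ψ_s` is symmetric with zero
row sums because `Hψ = λψ`, so `⟨x, (H - λ)x⟩ = ⟨θ, Fθ⟩ = -½ ∑_{r,s} F_rs (θ_s - θ_r)²`, and the
support condition turns this double sum into `-∑_e F_e (dθ)_e² = ⟨dθ, Φ dθ⟩`. Thus the surjection
`x ↦ d(x / ψ) : ℝ^V → dℝ^V` intertwines the two quadratic forms. Such a map preserves the maximal
dimension of a negative definite subspace, and on all of `ℝ^V` that dimension
is `n₋(H - λ)` by diagonalising `H - λ` (Sylvester's law of inertia). -/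

section ChangeOfVariables

variable {𝕜 : Type*} [RCLike 𝕜] {m n : Type*} [Fintype m] [Fintype n]

lemma bddAbove_negIndexOn_set (A : Matrix m m 𝕜) (W : Submodule 𝕜 (m → 𝕜)) :
    BddAbove {k : ℕ | ∃ U : Submodule 𝕜 (m → 𝕜), U ≤ W ∧ Module.finrank 𝕜 U = k ∧
      ∀ x ∈ U, x ≠ 0 → RCLike.re (star x ⬝ᵥ A *ᵥ x) < 0} :=
  ⟨Fintype.card m, by rintro _ ⟨U, -, rfl, -⟩; simpa using U.finrank_le⟩

lemma finrank_le_negIndexOn {A : Matrix m m 𝕜} {W U : Submodule 𝕜 (m → 𝕜)} (hUW : U ≤ W)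
    (hU : ∀ x ∈ U, x ≠ 0 → RCLike.re (star x ⬝ᵥ A *ᵥ x) < 0) :
    Module.finrank 𝕜 U ≤ negIndexOn A W :=
  le_csSup (bddAbove_negIndexOn_set A W) ⟨U, hUW, rfl, hU⟩

lemma negIndexOn_le {A : Matrix m m 𝕜} {W : Submodule 𝕜 (m → 𝕜)} {k : ℕ}
    (h : ∀ U ≤ W, (∀ x ∈ U, x ≠ 0 → RCLike.re (star x ⬝ᵥ A *ᵥ x) < 0) →
      Module.finrank 𝕜 U ≤ k) :
    negIndexOn A W ≤ k :=
  csSup_le ⟨0, ⊥, bot_le, finrank_bot 𝕜 _, fun x hx hx0 => (hx0 hx).elim⟩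
    (by rintro _ ⟨U, hUW, rfl, hU⟩; exact h U hUW hU)

/-- `T` need not be injective: a subspace on which `A` is negative definite meets `ker T`
trivially. -/
lemma negIndexOn_map {A : Matrix m m 𝕜} {B : Matrix n n 𝕜} (T : (m → 𝕜) →ₗ[𝕜] (n → 𝕜))
    (hT : ∀ x, RCLike.re (star (T x) ⬝ᵥ B *ᵥ T x) = RCLike.re (star x ⬝ᵥ A *ᵥ x))
    (W : Submodule 𝕜 (m → 𝕜)) :
    negIndexOn B (W.map T) = negIndexOn A W := by
  apply le_antisymm
  · refine negIndexOn_le fun U hUW hU => ?_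
    obtain ⟨lift, hlift⟩ := Module.projective_lifting_property (T.submoduleMap W)
      (Submodule.inclusion hUW) (LinearMap.submoduleMap_surjective T W)
    set g := W.subtype ∘ₗ lift
    have hTg : ∀ u : U, T (g u) = u := fun u => congrArg Subtype.val (LinearMap.congr_fun hlift u)
    have hg : Function.Injective g := fun u v huv => Subtype.ext <| by
      rw [← hTg u, ← hTg v, huv]
    rw [← LinearMap.finrank_range_of_inj hg]
    refine finrank_le_negIndexOn (by rintro _ ⟨u, rfl⟩; exact (lift u).2) ?_
    rintro _ ⟨u, rfl⟩ hu
    rw [← hT, hTg]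
    refine hU u u.2 fun h => hu ?_
    rw [show u = 0 from Subtype.ext h, map_zero]
  · refine negIndexOn_le fun U hUW hU => ?_
    have hinj : Function.Injective (T ∘ₗ U.subtype) := by
      rw [← LinearMap.ker_eq_bot, Submodule.eq_bot_iff]
      intro x hx
      by_contra hx0
      have hq := hU x x.2 (by simpa using hx0)
      rw [← hT, show T x = 0 from hx] at hq
      simp at hq
    rw [← LinearMap.finrank_range_of_inj hinj, LinearMap.range_comp, U.range_subtype]
    refine finrank_le_negIndexOn (Submodule.map_mono hUW) ?_
    rintro _ ⟨x, hx, rfl⟩ hTx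
    rw [hT]
    exact hU x hx (by rintro rfl; exact hTx (map_zero T))

end ChangeOfVariables

section Inertia

variable {m : Type*} [Fintype m] [DecidableEq m]

lemma negIndexOn_diagonal_top (w : m → ℝ) :
    negIndexOn (diagonal w) ⊤ = Nat.card {i // w i < 0} := by
  have hq : ∀ x : m → ℝ, RCLike.re (star x ⬝ᵥ diagonal w *ᵥ x) =
      QuadraticMap.weightedSumSquares ℝ w x := by
    intro x
    simp only [RCLike.re_to_real, star_trivial, mulVec_diagonal, dotProduct,
      QuadraticMap.weightedSumSquares_apply, smul_eq_mul]
    exact Finset.sum_congr rfl fun i _ => by ring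
  rw [← Set.coe_ofPred, Nat.card_coe_set_eq, ← QuadraticForm.sigNeg_weightedSumSquares]
  refine Eq.trans ?_ (sigNeg_isGreatest _).csSup_eq
  unfold negIndexOn
  congr! 3 with k U
  simp only [le_top, true_and, QuadraticMap.PosDef, QuadraticMap.restrict_apply,
    hq, Subtype.forall]
  refine exists_congr fun V => and_congr_right fun _ => forall₂_congr fun x hx => ?_
  simp

lemma Matrix.IsHermitian.negIndexOn_top {A : Matrix m m ℝ} (hA : A.IsHermitian) :
    negIndexOn A ⊤ = negEig A := by
  set U : Matrix m m ℝ := (hA.eigenvectorUnitary : Matrix m m ℝ)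
  have hUA : star U * A * U = diagonal (RCLike.ofReal ∘ hA.eigenvalues) := by
    simpa using hA.conjStarAlgAut_star_eigenvectorUnitary
  have hq : ∀ y : m → ℝ, RCLike.re (star (U *ᵥ y) ⬝ᵥ A *ᵥ (U *ᵥ y)) =
      RCLike.re (star y ⬝ᵥ diagonal (RCLike.ofReal ∘ hA.eigenvalues) *ᵥ y) := by
    intro y
    rw [← hUA, star_mulVec, ← dotProduct_mulVec, ← mulVec_mulVec, ← mulVec_mulVec]
    rfl
  have hU : (⊤ : Submodule ℝ (m → ℝ)).map U.mulVecLin = ⊤ := by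
    rw [Submodule.map_top, LinearMap.range_eq_top]
    intro y
    exact ⟨star U *ᵥ y, by
      rw [mulVecLin_apply, mulVec_mulVec, Unitary.mul_star_self_of_mem hA.eigenvectorUnitary.2,
        one_mulVec]⟩
  rw [← hU, negIndexOn_map _ hq, negIndexOn_diagonal_top, negEig, dif_pos hA]
  rfl

end Inertia

lemma Matrix.IsSymm.sum_sum_mul_sub_sq {V : Type*} [Fintype V] {F : Matrix V V ℝ}
    (hF : F.IsSymm) (hrow : F *ᵥ 1 = 0) (θ : V → ℝ) :
    ∑ r, ∑ s, F r s * (θ s - θ r) ^ 2 = -2 * (θ ⬝ᵥ F *ᵥ θ) := by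
  have hrow' : ∀ r, ∑ s, F r s = 0 := fun r => by
    simpa [mulVec, dotProduct] using congrFun hrow r
  have hsq_left : ∑ r, ∑ s, F r s * θ r ^ 2 = 0 := by
    simp [← Finset.sum_mul, hrow']
  have hsq_right : ∑ r, ∑ s, F r s * θ s ^ 2 = 0 := by
    rw [Finset.sum_comm]
    simp [hF.apply, ← Finset.sum_mul, hrow']
  have hcross : θ ⬝ᵥ F *ᵥ θ = ∑ r, ∑ s, F r s * θ r * θ s := by
    simp only [dotProduct, mulVec, Finset.mul_sum]
    exact Finset.sum_congr rfl fun r _ => Finset.sum_congr rfl fun s _ => by ring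
  calc ∑ r, ∑ s, F r s * (θ s - θ r) ^ 2
      = ∑ r, ∑ s, F r s * θ s ^ 2 + ∑ r, ∑ s, F r s * θ r ^ 2
          - 2 * ∑ r, ∑ s, F r s * θ r * θ s := by
        simp only [Finset.mul_sum, ← Finset.sum_add_distrib, ← Finset.sum_sub_distrib]
        exact Finset.sum_congr rfl fun r _ => Finset.sum_congr rfl fun s _ => by ring
    _ = -2 * (θ ⬝ᵥ F *ᵥ θ) := by rw [hsq_left, hsq_right, hcross]; ring

namespace OrientedGraph

variable {V E : Type*} (G : OrientedGraph V E)

def dart : E ⊕ E → V × V :=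
  Sum.elim (fun e => (G.src e, G.tgt e)) (fun e => (G.tgt e, G.src e))

lemma dart_injective : Function.Injective G.dart := by
  rintro (e | e) (f | f) h <;> simp only [dart, Sum.elim_inl, Sum.elim_inr, Prod.mk.injEq] at h
  · exact congrArg Sum.inl (G.edgeInj e f (Or.inl h))
  · obtain rfl := G.edgeInj e f (Or.inr h)
    exact (G.loopless e h.1).elim
  · obtain rfl := G.edgeInj e f (Or.inr h.symm)
    exact (G.loopless e h.2).elim
  · exact congrArg Sum.inr (G.edgeInj e f (Or.inl h.symm))

lemma mem_range_dart {p : V × V} : p ∈ Set.range G.dart ↔ G.toSimpleGraph.Adj p.1 p.2 := by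
  constructor
  · rintro ⟨e | e, rfl⟩
    exacts [⟨e, Or.inl ⟨rfl, rfl⟩⟩, ⟨e, Or.inr ⟨rfl, rfl⟩⟩]
  · rintro ⟨e, ⟨h1, h2⟩ | ⟨h1, h2⟩⟩
    exacts [⟨Sum.inl e, by simp [dart, h1, h2]⟩, ⟨Sum.inr e, by simp [dart, h1, h2]⟩]

lemma sum_sum_eq_two_mul_sum_edges [Fintype V] [Fintype E] (P : V → V → ℝ)
    (hP : ∀ r s, P r s = P s r) (hadj : ∀ r s, P r s ≠ 0 → G.toSimpleGraph.Adj r s) :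
    ∑ r, ∑ s, P r s = 2 * ∑ e, P (G.src e) (G.tgt e) := by
  have hdart : ∑ x, P (G.dart x).1 (G.dart x).2 = ∑ p : V × V, P p.1 p.2 :=
    Fintype.sum_of_injective _ G.dart_injective _ _
      (fun p hp => by_contra fun h => hp (G.mem_range_dart.2 (hadj _ _ h))) fun _ => rfl
  rw [← Fintype.sum_prod_type', ← hdart, Fintype.sum_sum_type]
  simp only [dart, Sum.elim_inl, Sum.elim_inr, hP (G.tgt _)]
  ring

lemma cob_mulVec [DecidableEq V] [Fintype V] (θ : V → ℝ) (e : E) :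
    (G.cob *ᵥ θ) e = θ (G.tgt e) - θ (G.src e) := by
  simp [OrientedGraph.cob, mulVec, dotProduct, sub_mul, Finset.sum_sub_distrib]

lemma cob_dotProduct_phiMat_mulVec_cob [Fintype V] [Fintype E] [DecidableEq V] [DecidableEq E]
    {H : Matrix V V ℝ} (hsymm : H.IsSymm) (hsupp : G.Support H) {lam : ℝ} {ψ : V → ℝ} (heig : H *ᵥ ψ = lam • ψ) (θ : V → ℝ) :
    G.cob *ᵥ θ ⬝ᵥ PhiMat G H ψ *ᵥ (G.cob *ᵥ θ) =
      (ψ * θ) ⬝ᵥ (H - lam • (1 : Matrix V V ℝ)) *ᵥ (ψ * θ) := by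
  set A := H - lam • (1 : Matrix V V ℝ)
  set F : Matrix V V ℝ := of fun r s => ψ r * A r s * ψ s
  have hAoff : ∀ r s, r ≠ s → A r s = H r s := fun r s h => by simp [A, one_apply_ne h]
  have hA : A.IsSymm := hsymm.sub (isSymm_one.smul lam)
  have hF : F.IsSymm := by
    ext r s
    simp only [F, transpose_apply, of_apply, hA.apply]
    ring
  have hrow : F *ᵥ 1 = 0 := by
    have hAψ : A *ᵥ ψ = 0 := by rw [sub_mulVec, heig, smul_mulVec, one_mulVec, sub_self]
    ext r
    simpa [F, mulVec, dotProduct, mul_assoc, ← Finset.mul_sum] using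
      Or.inr (congrFun hAψ r)
  have hedges := G.sum_sum_eq_two_mul_sum_edges (fun r s => F r s * (θ s - θ r) ^ 2)
    (fun r s => by simp only [hF.apply r s]; ring) fun r s hP => by
      have hrs : r ≠ s := by rintro rfl; simp at hP
      refine hsupp r s hrs fun hH => hP ?_
      simp [F, hAoff r s hrs, hH]
  have hLHS : G.cob *ᵥ θ ⬝ᵥ PhiMat G H ψ *ᵥ (G.cob *ᵥ θ) =
      -∑ e, F (G.src e) (G.tgt e) * (θ (G.tgt e) - θ (G.src e)) ^ 2 := by
    simp only [dotProduct, PhiMat, mulVec_diagonal, G.cob_mulVec, F, of_apply,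
      hAoff _ _ (G.loopless _), ← Finset.sum_neg_distrib]
    exact Finset.sum_congr rfl fun e _ => by ring
  have hRHS : (ψ * θ) ⬝ᵥ A *ᵥ (ψ * θ) = θ ⬝ᵥ F *ᵥ θ := by
    simp only [dotProduct, mulVec, Finset.mul_sum, F, of_apply, Pi.mul_apply]
    exact Finset.sum_congr rfl fun r _ => Finset.sum_congr rfl fun s _ => by ring
  linarith [hF.sum_sum_mul_sub_sq hrow θ]

end OrientedGraph

theorem neg_index_compression_coboundary_general
    {V E : Type*} [Fintype V] [Fintype E] [DecidableEq V] [DecidableEq E]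
    (G : OrientedGraph V E)
    (H : Matrix V V ℝ) (hsymm : H.IsSymm) (hsupp : G.StrictSupport H)
    (lam : ℝ) (ψ : V → ℝ) (heig : H.mulVec ψ = lam • ψ) (hψ : ∀ r, ψ r ≠ 0) :
    negIndexOn (PhiMat G H ψ) (LinearMap.range G.cob.mulVecLin) =
      negEig (H - lam • (1 : Matrix V V ℝ)) := by
  have hA : (H - lam • (1 : Matrix V V ℝ)).IsHermitian :=
    isHermitian_iff_isSymm.2 (hsymm.sub (isSymm_one.smul lam))
  have hψψ : ψ * ψ⁻¹ = 1 := funext fun r => mul_inv_cancel₀ (hψ r)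
  let T : (V → ℝ) →ₗ[ℝ] (E → ℝ) := G.cob.mulVecLin ∘ₗ LinearMap.mulLeft ℝ ψ⁻¹
  have hT : (⊤ : Submodule ℝ (V → ℝ)).map T = LinearMap.range G.cob.mulVecLin := by
    refine (Submodule.map_top T).trans (LinearMap.range_comp_of_range_eq_top _ ?_)
    exact LinearMap.range_eq_top.2 fun x => ⟨ψ * x, by
      rw [LinearMap.mulLeft_apply, ← mul_assoc, mul_comm ψ⁻¹, hψψ, one_mul]⟩
  rw [← hT, negIndexOn_map T (fun x => ?_), hA.negIndexOn_top]
  simpa [T, ← mul_assoc, hψψ] using G.cob_dotProduct_phiMat_mulVec_cob hsymm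
    (fun r s hrs => (hsupp r s hrs).1) heig (ψ⁻¹ * x)

/-- `n₋([Φ]_{dℝ^V}) = n₋(H - λI)`. -/
theorem neg_index_compression_coboundary
    {V E : Type*} [Fintype V] [Fintype E] [DecidableEq V] [DecidableEq E]
    (G : OrientedGraph V E) (hconn : G.toSimpleGraph.Connected)
    (H : Matrix V V ℝ) (hsymm : H.IsSymm) (hsupp : G.StrictSupport H)
    (lam : ℝ) (ψ : V → ℝ) (heig : H.mulVec ψ = lam • ψ) (hψ : ∀ r, ψ r ≠ 0) :
    negIndexOn (PhiMat G H ψ) (LinearMap.range G.cob.mulVecLin) =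
      negEig (H - lam • (1 : Matrix V V ℝ)) :=
  neg_index_compression_coboundary_general G H hsymm hsupp lam ψ heig hψ
end
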